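/- arXiv:1412.0995 — 6 statements merged into one kernel-verified Lean document; each statement's English description precedes it below -/
import Mathlib

section
/- For every complex number x such that either x has nonzero imaginary part or its real part lies outside [-1,1], the equation (d + 1/d)/2 = x in the unknown d has exactly two roots d₊ and d₋, satisfying |d₋| < 1 and |d₊| > 1. -/
/-! Writing `x = (a + a⁻¹)/2`, the roots of `(d + 1/d)/2 = x` are exactly `a` and `a⁻¹`, and such
an `a` exists because `ℂ` is algebraically closed. The two roots have reciprocal norms, so they
lie on opposite sides of the unit circle unless `‖a‖ = 1`; but then `a⁻¹ = conj a`, which forces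
`x = Re a ∈ [-1, 1]`. -/

open Complex

theorem half_add_inv_eq_iff {K : Type*} [Field K] [NeZero (2 : K)] {a x d : K} (ha : a ≠ 0)
    (hsum : a + a⁻¹ = 2 * x) (hd : d ≠ 0) : (d + 1 / d) / 2 = x ↔ d = a ∨ d = a⁻¹ := by
  have hfactor : (d - a) * (d - a⁻¹) = d * (d + 1 / d - (a + a⁻¹)) := by
    field_simp
    ring
  calc (d + 1 / d) / 2 = x ↔ d + 1 / d - (a + a⁻¹) = 0 := by
        rw [hsum, div_eq_iff two_ne_zero, sub_eq_zero, mul_comm]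
    _ ↔ (d - a) * (d - a⁻¹) = 0 := by rw [hfactor, mul_eq_zero, or_iff_right hd]
    _ ↔ d = a ∨ d = a⁻¹ := by rw [mul_eq_zero, sub_eq_zero, sub_eq_zero]

theorem exists_add_inv_eq_two_mul {K : Type*} [Field K] [IsAlgClosed K] (x : K) :
    ∃ a : K, a ≠ 0 ∧ a + a⁻¹ = 2 * x := by
  obtain ⟨s, hs⟩ := IsAlgClosed.exists_pow_nat_eq (x ^ 2 - 1) two_pos
  have hmul : (x + s) * (x - s) = 1 := by linear_combination -hs
  refine ⟨x + s, left_ne_zero_of_mul_eq_one hmul, ?_⟩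
  rw [inv_eq_of_mul_eq_one_right hmul]
  ring

theorem Complex.norm_ne_one_of_add_inv_eq_two_mul {a x : ℂ} (hsum : a + a⁻¹ = 2 * x)
    (hx : x.im ≠ 0 ∨ x.re ∉ Set.Icc (-1 : ℝ) 1) : ‖a‖ ≠ 1 := by
  intro h1
  have hxa : x = a.re := by
    have h2 := add_conj a
    rw [← inv_eq_conj h1, hsum] at h2
    push_cast at h2
    exact mul_left_cancel₀ two_ne_zero h2
  rw [hxa, ofReal_im, ofReal_re] at hx
  exact hx.elim (· rfl) (· (abs_le.1 ((abs_re_le_norm a).trans h1.le)))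

theorem Complex.exists_norm_lt_one_add_inv_eq_two_mul {x : ℂ}
    (hx : x.im ≠ 0 ∨ x.re ∉ Set.Icc (-1 : ℝ) 1) : ∃ a : ℂ, a ≠ 0 ∧ ‖a‖ < 1 ∧ a + a⁻¹ = 2 * x := by
  obtain ⟨a, ha0, hsum⟩ := exists_add_inv_eq_two_mul x
  rcases (norm_ne_one_of_add_inv_eq_two_mul hsum hx).lt_or_gt with hlt | hgt
  · exact ⟨a, ha0, hlt, hsum⟩
  · refine ⟨a⁻¹, inv_ne_zero ha0, ?_, by rwa [inv_inv, add_comm]⟩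
    rw [norm_inv]
    exact inv_lt_one_of_one_lt₀ hgt

/-- For every complex `x` with nonzero imaginary part or real part
outside `[-1,1]`, the equation `(d + 1/d)/2 = x` (equivalently `d² - 2xd + 1 = 0`)
has exactly two roots `d₊`, `d₋` with `|d₋| < 1` and `|d₊| > 1`. -/
theorem stmt_0 (x : ℂ) (hx : x.im ≠ 0 ∨ x.re ∉ Set.Icc (-1 : ℝ) 1) :
    ∃ dp dm : ℂ, dp ≠ dm ∧ ‖dm‖ < 1 ∧ 1 < ‖dp‖ ∧
      (∀ d : ℂ, d ≠ 0 → ((d + 1 / d) / 2 = x ↔ d = dp ∨ d = dm)) := by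
  obtain ⟨a, ha0, hlt, hsum⟩ := exists_norm_lt_one_add_inv_eq_two_mul hx
  have hgt : 1 < ‖a⁻¹‖ := by
    rw [norm_inv]
    exact (one_lt_inv₀ (norm_pos_iff.2 ha0)).2 hlt
  exact ⟨a⁻¹, a, fun h => (hlt.trans hgt).ne (by rw [h]), hlt, hgt,
    fun d hd => (half_add_inv_eq_iff ha0 hsum hd).trans or_comm⟩
end

section
/- Let N, h be positive integers with N - h - 1 ≥ h ≥ 1 and ρ real with 0 < |ρ| < 1. Then the quadratic Q₂(x) = -(4hρ²/(1+ρ²))x² - 2(N-2h-1)ρx + (N-h-1)(1+ρ²) + 1-ρ² has discriminant Δ = 4(N-2h-1)²ρ² + 4·(4hρ²/(1+ρ²))·[(N-h-1)(1+ρ²)+1-ρ²] satisfying Δ > 4ρ²(N-1)². -/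
/-! The difference `Δ - 4ρ²(N-1)²` simplifies to `16hρ²(1-ρ²)/(1+ρ²)`: the terms in `N`
cancel, since `(N-2h-1)² - (N-1)² = -4h(N-h-1)`, which is exactly the opposite of the
`(N-h-1)(1+ρ²)` part of the second summand. The remainder is positive for `h > 0` and
`0 < ρ² < 1`. -/

lemma discriminant_sub_eq (N h ρ : ℝ) :
    4 * (N - 2 * h - 1) ^ 2 * ρ ^ 2 +
        4 * (4 * h * ρ ^ 2 / (1 + ρ ^ 2)) * ((N - h - 1) * (1 + ρ ^ 2) + 1 - ρ ^ 2) -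
      4 * ρ ^ 2 * (N - 1) ^ 2 =
    16 * h * ρ ^ 2 * (1 - ρ ^ 2) / (1 + ρ ^ 2) := by
  field_simp
  ring

theorem stmt_5_general (N h : ℕ) (hh : 1 ≤ h)
    (ρ : ℝ) (hρ0 : 0 < |ρ|) (hρ1 : |ρ| < 1) :
    4 * ((N : ℝ) - 2 * h - 1) ^ 2 * ρ ^ 2 +
        4 * (4 * h * ρ ^ 2 / (1 + ρ ^ 2)) *
          (((N : ℝ) - h - 1) * (1 + ρ ^ 2) + 1 - ρ ^ 2) >
      4 * ρ ^ 2 * ((N : ℝ) - 1) ^ 2 := by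
  rw [gt_iff_lt, ← sub_pos, discriminant_sub_eq]
  have hh₀ : (0 : ℝ) < h := Nat.cast_pos.2 hh
  have hρ₀ : 0 < ρ ^ 2 := by rw [← sq_abs]; positivity
  have hρ₁ : 0 < 1 - ρ ^ 2 := sub_pos.2 ((sq_lt_one_iff_abs_lt_one ρ).2 hρ1)
  positivity

/-- For positive integers `N, h` with `N - h - 1 ≥ h ≥ 1` and real
`ρ` with `0 < |ρ| < 1`, the discriminant
`Δ = 4(N-2h-1)²ρ² + 4·(4hρ²/(1+ρ²))·[(N-h-1)(1+ρ²)+1-ρ²]`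
of the quadratic `Q₂` satisfies `Δ > 4ρ²(N-1)²`. -/
theorem stmt_5 (N h : ℕ) (hh : 1 ≤ h) (hNh : (h : ℝ) ≤ (N : ℝ) - h - 1)
    (ρ : ℝ) (hρ0 : 0 < |ρ|) (hρ1 : |ρ| < 1) :
    4 * ((N : ℝ) - 2 * h - 1) ^ 2 * ρ ^ 2 +
        4 * (4 * h * ρ ^ 2 / (1 + ρ ^ 2)) *
          (((N : ℝ) - h - 1) * (1 + ρ ^ 2) + 1 - ρ ^ 2) >
      4 * ρ ^ 2 * ((N : ℝ) - 1) ^ 2 :=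
  stmt_5_general N h hh ρ hρ0 hρ1
end

section
/- Let x₋ < x₊ be the two real roots of Q₂ as above and set d₁ = x₋ + √(x₋² - 1) and d₂ = x₊ - √(x₊² - 1) (these are the roots of modulus < 1 associated to x₋ and x₊). Then ρ(d₁ + d₂) ≥ 0. -/
/-!
With `g x = x - √(x² - 1)` we have `d₁ = -g (-x₋)` and `d₂ = g x₊`, and on `[1, ∞)` the map `g`
is decreasing, being the reciprocal of `x + √(x² - 1)`. By Vieta, `Q₂` has negative leading
coefficient and positive constant term, so `x₋ < -1 < 1 < x₊`, and `ρ (x₊ - (-x₋)) = ρ (x₋ + x₊) ≤ 0`.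
Since `g` is decreasing, this flips to `ρ (g x₊ - g (-x₋)) ≥ 0`.
-/

open Real Set

lemma sub_sqrt_sq_sub_one_eq_inv {x : ℝ} (hx : 1 ≤ x) :
    x - √(x ^ 2 - 1) = (x + √(x ^ 2 - 1))⁻¹ := by
  have hsq : √(x ^ 2 - 1) ^ 2 = x ^ 2 - 1 := sq_sqrt (by nlinarith)
  exact eq_inv_of_mul_eq_one_left (by linear_combination -hsq)

lemma antitoneOn_sub_sqrt_sq_sub_one :
    AntitoneOn (fun x : ℝ => x - √(x ^ 2 - 1)) (Ici 1) := by
  intro a ha b hb hab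
  have ha0 : 0 < a := zero_lt_one.trans_le ha
  simp only [sub_sqrt_sq_sub_one_eq_inv ha, sub_sqrt_sq_sub_one_eq_inv hb]
  gcongr

lemma mul_sub_sqrt_sq_sub_one_nonneg {ρ u v : ℝ} (hu : 1 ≤ u) (hv : 1 ≤ v)
    (h : ρ * (v - u) ≤ 0) :
    0 ≤ ρ * ((v - √(v ^ 2 - 1)) - (u - √(u ^ 2 - 1))) := by
  have hg := antitoneOn_sub_sqrt_sq_sub_one (mem_Ici.mpr hu) (mem_Ici.mpr hv)
  have hg' := antitoneOn_sub_sqrt_sq_sub_one (mem_Ici.mpr hv) (mem_Ici.mpr hu)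
  rcases lt_trichotomy ρ 0 with hρ | rfl | hρ
  · exact mul_nonneg_of_nonpos_of_nonpos hρ.le
      (sub_nonpos.mpr (hg (by nlinarith)))
  · simp
  · exact mul_nonneg hρ.le (sub_nonneg.mpr (hg' (by nlinarith)))

lemma add_eq_and_mul_eq_of_quadratic_roots {K : Type*} [Field K] {a b c x y : K}
    (hx : a * x ^ 2 + b * x + c = 0) (hy : a * y ^ 2 + b * y + c = 0) (hxy : x ≠ y) :
    a * (x + y) = -b ∧ a * (x * y) = c := by
  have hsum : a * (x + y) = -b := by
    have : (x - y) * (a * (x + y) + b) = 0 := by linear_combination hx - hy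
    linear_combination (mul_eq_zero.mp this).resolve_left (sub_ne_zero.mpr hxy)
  exact ⟨hsum, by linear_combination x * hsum - hx⟩

theorem stmt_7_general (N h : ℕ) (hh : 1 ≤ h) (hNh : (h : ℝ) ≤ (N : ℝ) - h - 1)
    (ρ : ℝ) (hρ0 : 0 < |ρ|) (xm xp : ℝ)
    (hroot_m : -(4 * h * ρ ^ 2 / (1 + ρ ^ 2)) * xm ^ 2 -
        2 * ((N : ℝ) - 2 * h - 1) * ρ * xm +
        ((N : ℝ) - h - 1) * (1 + ρ ^ 2) + 1 - ρ ^ 2 = 0)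
    (hroot_p : -(4 * h * ρ ^ 2 / (1 + ρ ^ 2)) * xp ^ 2 -
        2 * ((N : ℝ) - 2 * h - 1) * ρ * xp +
        ((N : ℝ) - h - 1) * (1 + ρ ^ 2) + 1 - ρ ^ 2 = 0)
    (hlt : xm < xp) (hm1 : 1 < |xm|) (hp1 : 1 < |xp|) :
    0 ≤ ρ * ((xm + Real.sqrt (xm ^ 2 - 1)) + (xp - Real.sqrt (xp ^ 2 - 1))) := by
  have hh' : (1 : ℝ) ≤ h := by exact_mod_cast hh
  have hρ : ρ ≠ 0 := abs_pos.mp hρ0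
  set A := 4 * h * ρ ^ 2 / (1 + ρ ^ 2)
  set C := ((N : ℝ) - h - 1) * (1 + ρ ^ 2) + 1 - ρ ^ 2
  have hA : 0 < A := by positivity
  have hC : 0 < C := by nlinarith [sq_nonneg ρ]
  obtain ⟨hsum, hprod⟩ := add_eq_and_mul_eq_of_quadratic_roots (a := -A)
    (b := -(2 * ((N : ℝ) - 2 * h - 1) * ρ)) (c := C)
    (by linear_combination hroot_m) (by linear_combination hroot_p) hlt.ne
  have hmul : xm * xp < 0 := by nlinarith
  have hxm : xm < -1 := by
    have : xm < 0 := by nlinarith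
    linarith [abs_of_neg this]
  have hxp : 1 < xp := by
    have : 0 < xp := by nlinarith
    linarith [abs_of_pos this]
  have hρsum : ρ * (xp - -xm) ≤ 0 := by
    have : A * (ρ * (xm + xp)) = -(2 * ((N : ℝ) - 2 * h - 1) * ρ ^ 2) := by
      linear_combination -ρ * hsum
    nlinarith [sq_nonneg ρ]
  have key := mul_sub_sqrt_sq_sub_one_nonneg (by linarith) hxp.le hρsum
  rw [neg_sq] at key
  linarith

/-- If `x₋ < x₊` are the two real roots of `Q₂` (both of absolute
value `> 1`), and `d₁ = x₋ + √(x₋²-1)`, `d₂ = x₊ - √(x₊²-1)`, then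
`ρ(d₁ + d₂) ≥ 0`. -/
theorem stmt_7 (N h : ℕ) (hh : 1 ≤ h) (hNh : (h : ℝ) ≤ (N : ℝ) - h - 1)
    (ρ : ℝ) (hρ0 : 0 < |ρ|) (hρ1 : |ρ| < 1) (xm xp : ℝ)
    (hroot_m : -(4 * h * ρ ^ 2 / (1 + ρ ^ 2)) * xm ^ 2 -
        2 * ((N : ℝ) - 2 * h - 1) * ρ * xm +
        ((N : ℝ) - h - 1) * (1 + ρ ^ 2) + 1 - ρ ^ 2 = 0)
    (hroot_p : -(4 * h * ρ ^ 2 / (1 + ρ ^ 2)) * xp ^ 2 -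
        2 * ((N : ℝ) - 2 * h - 1) * ρ * xp +
        ((N : ℝ) - h - 1) * (1 + ρ ^ 2) + 1 - ρ ^ 2 = 0)
    (hlt : xm < xp) (hm1 : 1 < |xm|) (hp1 : 1 < |xp|) :
    0 ≤ ρ * ((xm + Real.sqrt (xm ^ 2 - 1)) + (xp - Real.sqrt (xp ^ 2 - 1))) :=
  stmt_7_general N h hh hNh ρ hρ0 xm xp hroot_m hroot_p hlt hm1 hp1
end

section
/- Let ρ ∈ ℝ with 0 < |ρ| < 1 and d₁, d₂ real with |d₁| < 1, |d₂| < 1 and ρ(d₁+d₂) ≥ 0 and d₁ < 0 < d₂. Let N, h satisfy N - h - 1 ≥ h ≥ 1. Then the quantity s(d₁,d₂) = (1+ρ²)[(N-1)(1-d₁ρ)(1-d₂ρ) + (1-ρ²)(1+d₁d₂ρ²)] + h(1-d₁ρ)(1-d₂ρ)(-1 + (d₁+d₂)ρ + d₁d₂ρ² - 2ρ²) is strictly positive. -/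
/-!
Writing `A = (1 - d₁ρ)(1 - d₂ρ)` and `B = 1 + d₁d₂ρ²`, and using `A + (d₁ + d₂)ρ = B`, the
quantity equals
`(1 + ρ²)(N - 1 - 2h) A + (1 + ρ²)(1 - ρ²) B + h A (B + (d₁ + d₂)ρ)`.
The first and last summands are nonnegative and the middle one is positive, because each of
`1 - d₁ρ`, `1 - d₂ρ`, `B` and `1 - ρ²` has the form `1 - xy` with `|x|, |y| < 1`.
-/

section OrderedRing

variable {R : Type*} [Ring R] [LinearOrder R] [IsStrictOrderedRing R] {a b : R}

lemma abs_mul_lt_one_of_abs_lt_one (ha : |a| < 1) (hb : |b| < 1) : |a * b| < 1 := by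
  rw [abs_mul]
  exact mul_lt_one_of_nonneg_of_lt_one_left (abs_nonneg a) ha hb.le

lemma one_sub_mul_pos_of_abs_lt_one (ha : |a| < 1) (hb : |b| < 1) : 0 < 1 - a * b :=
  sub_pos.mpr ((le_abs_self _).trans_lt (abs_mul_lt_one_of_abs_lt_one ha hb))

end OrderedRing

lemma s_eq_weighted_sum {R : Type*} [CommRing R] (N h ρ d₁ d₂ : R) :
    (1 + ρ ^ 2) * ((N - 1) * (1 - d₁ * ρ) * (1 - d₂ * ρ) + (1 - ρ ^ 2) * (1 + d₁ * d₂ * ρ ^ 2)) +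
        h * (1 - d₁ * ρ) * (1 - d₂ * ρ) * (-1 + (d₁ + d₂) * ρ + d₁ * d₂ * ρ ^ 2 - 2 * ρ ^ 2) =
      (1 + ρ ^ 2) * (N - 1 - 2 * h) * ((1 - d₁ * ρ) * (1 - d₂ * ρ)) +
        (1 + ρ ^ 2) * (1 - ρ ^ 2) * (1 + d₁ * d₂ * ρ ^ 2) +
        h * ((1 - d₁ * ρ) * (1 - d₂ * ρ)) * (1 + d₁ * d₂ * ρ ^ 2 + ρ * (d₁ + d₂)) := by
  ring

theorem stmt_8_general (N h : ℕ) (hNh : (h : ℝ) ≤ (N : ℝ) - h - 1)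
    (ρ : ℝ) (hρ1 : |ρ| < 1) (d₁ d₂ : ℝ)
    (hd₁ : |d₁| < 1) (hd₂ : |d₂| < 1) (hsum : 0 ≤ ρ * (d₁ + d₂)) :
    0 < (1 + ρ ^ 2) * (((N : ℝ) - 1) * (1 - d₁ * ρ) * (1 - d₂ * ρ) +
          (1 - ρ ^ 2) * (1 + d₁ * d₂ * ρ ^ 2)) +
        h * (1 - d₁ * ρ) * (1 - d₂ * ρ) *
          (-1 + (d₁ + d₂) * ρ + d₁ * d₂ * ρ ^ 2 - 2 * ρ ^ 2) := by
  have hA : 0 < (1 - d₁ * ρ) * (1 - d₂ * ρ) :=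
    mul_pos (one_sub_mul_pos_of_abs_lt_one hd₁ hρ1) (one_sub_mul_pos_of_abs_lt_one hd₂ hρ1)
  have hB : 0 < 1 + d₁ * d₂ * ρ ^ 2 := by
    have h₁ : |-(d₁ * ρ)| < 1 := by rw [abs_neg]; exact abs_mul_lt_one_of_abs_lt_one hd₁ hρ1
    linear_combination one_sub_mul_pos_of_abs_lt_one h₁ (abs_mul_lt_one_of_abs_lt_one hd₂ hρ1)
  have hρ : 0 < 1 - ρ ^ 2 := by
    linear_combination one_sub_mul_pos_of_abs_lt_one hρ1 hρ1
  have hN : (0 : ℝ) ≤ N - 1 - 2 * h := by linarith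
  rw [s_eq_weighted_sum]
  positivity

/-- Positivity of `s(d₁,d₂)`. -/
theorem stmt_8 (N h : ℕ) (hh : 1 ≤ h) (hNh : (h : ℝ) ≤ (N : ℝ) - h - 1)
    (ρ : ℝ) (hρ0 : 0 < |ρ|) (hρ1 : |ρ| < 1) (d₁ d₂ : ℝ)
    (hd₁ : |d₁| < 1) (hd₂ : |d₂| < 1) (hsum : 0 ≤ ρ * (d₁ + d₂))
    (hsign : d₁ < 0 ∧ 0 < d₂) :
    0 < (1 + ρ ^ 2) * (((N : ℝ) - 1) * (1 - d₁ * ρ) * (1 - d₂ * ρ) +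
          (1 - ρ ^ 2) * (1 + d₁ * d₂ * ρ ^ 2)) +
        h * (1 - d₁ * ρ) * (1 - d₂ * ρ) *
          (-1 + (d₁ + d₂) * ρ + d₁ * d₂ * ρ ^ 2 - 2 * ρ ^ 2) :=
  stmt_8_general N h hNh ρ hρ1 d₁ d₂ hd₁ hd₂ hsum
end

section
/- Let H_m(d) = D_m⁻¹ R_m D_m be the tridiagonal matrix as above (with R_m invertible) and let T_m(x) be the m×m symmetric Toeplitz matrix whose (i,j) entry is T_{|i-j|}(x), the Chebyshev polynomial of the first kind of degree |i-j| evaluated at x = (d + d⁻¹)/2. Then 𝟙ᵀ H_m(d)⁻¹ 𝟙 = tr(T_m(x) R_m⁻¹). -/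
open Matrix

/-!
Conjugation by `D = diag(dⁱ)` turns `𝟙ᵀ H⁻¹ 𝟙 = 𝟙ᵀ D⁻¹ R⁻¹ D 𝟙` into `tr(E R⁻¹)` with
`E i j = d^(i-j)`. As `R⁻¹` is symmetric, `E` may be replaced by its symmetric part
`(E + Eᵀ)/2`, whose entries `(d^(i-j) + d^(j-i))/2` are `T_{|i-j|}((d + d⁻¹)/2)`.
-/

namespace Polynomial.Chebyshev

theorem T_eval_half_add_inv {K : Type*} [Field K] [NeZero (2 : K)] {d : K} (hd : d ≠ 0)
    (n : ℤ) : (T K n).eval ((d + d⁻¹) / 2) = (d ^ n + d ^ (-n)) / 2 := by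
  let _ : Invertible (2 : K) := invertibleOfNonzero two_ne_zero
  have hnat (k : ℕ) : (T K k).eval ((d + d⁻¹) / 2) = (d ^ k + d⁻¹ ^ k) / 2 := by
    rw [chebyshev_T_eq_dickson_one_one, eval_mul, eval_comp, eval_mul, eval_ofNat, eval_X,
      mul_div_cancel₀ _ two_ne_zero, dickson_one_one_eval_add_inv d d⁻¹ (mul_inv_cancel₀ hd),
      eval_C, invOf_eq_inv, inv_mul_eq_div]
  obtain ⟨k, rfl | rfl⟩ := Int.eq_nat_or_neg n
  · simp [hnat]
  · simp [T_neg, hnat, add_comm]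

end Polynomial.Chebyshev

namespace Matrix

variable {n α : Type*} [Fintype n]

theorem trace_transpose_mul_of_isSymm [CommSemiring α] {S : Matrix n n α} (hS : S.IsSymm)
    (A : Matrix n n α) : trace (Aᵀ * S) = trace (A * S) := by
  rw [← trace_transpose, transpose_mul, transpose_transpose, hS.eq, trace_mul_comm]

theorem dotProduct_mulVec_eq_trace_vecMulVec_mul [CommSemiring α] (u v : n → α)
    (S : Matrix n n α) : u ⬝ᵥ (S *ᵥ v) = trace (vecMulVec v u * S) := by
  rw [vecMulVec_mul, trace_vecMulVec, dotProduct_mulVec, dotProduct_comm]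

variable [DecidableEq n]

theorem inv_conj [CommRing α] {P : Matrix n n α} (hP : IsUnit P.det) (A : Matrix n n α) :
    (P⁻¹ * A * P)⁻¹ = P⁻¹ * A⁻¹ * P := by
  rw [mul_inv_rev, mul_inv_rev, nonsing_inv_nonsing_inv P hP, Matrix.mul_assoc]

theorem one_dotProduct_diagonal_mul_mul_diagonal_mulVec_one [CommSemiring α] (u v : n → α)
    (S : Matrix n n α) : 1 ⬝ᵥ ((diagonal u * S * diagonal v) *ᵥ 1) = u ⬝ᵥ (S *ᵥ v) := by
  have hv : diagonal v *ᵥ 1 = v := funext fun i => by rw [mulVec_diagonal, Pi.one_apply, mul_one]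
  have hu : 1 ᵥ* diagonal u = u := funext fun i => by rw [vecMul_diagonal, Pi.one_apply, one_mul]
  rw [← mulVec_mulVec, ← mulVec_mulVec, hv, dotProduct_mulVec, hu]

end Matrix

theorem stmt_14_general (m : ℕ) (d : ℂ) (hd : d ≠ 0) (ρ : ℝ)
    (R : Matrix (Fin m) (Fin m) ℂ)
    (hR : ∀ i j : Fin m, R i j =
      if (i : ℕ) = (j : ℕ) then 1 + (ρ : ℂ) ^ 2
      else if (i : ℕ) + 1 = (j : ℕ) ∨ (j : ℕ) + 1 = (i : ℕ) then -(ρ : ℂ) else 0) :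
    let D : Matrix (Fin m) (Fin m) ℂ := Matrix.diagonal fun i => d ^ (i : ℕ)
    let H : Matrix (Fin m) (Fin m) ℂ := D⁻¹ * R * D
    let x : ℂ := (d + d⁻¹) / 2
    let T : Matrix (Fin m) (Fin m) ℂ :=
      Matrix.of fun i j =>
        (Polynomial.Chebyshev.T ℂ (((i : ℤ) - (j : ℤ)).natAbs : ℤ)).eval x
    (fun _ : Fin m => (1 : ℂ)) ⬝ᵥ (H⁻¹ *ᵥ fun _ => (1 : ℂ)) =
      Matrix.trace (T * R⁻¹) := by
  intro D H x T
  have hRsymm : R.IsSymm := IsSymm.ext fun i j => by simp only [hR, eq_comm, or_comm]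
  have hDdet : IsUnit D.det := by
    rw [det_diagonal]
    exact (Finset.prod_ne_zero_iff.mpr fun i _ => pow_ne_zero _ hd).isUnit
  have hDinv : D⁻¹ = diagonal fun i : Fin m => (d ^ (i : ℕ))⁻¹ := by
    refine inv_eq_right_inv ?_
    rw [diagonal_mul_diagonal, ← diagonal_one]
    exact congrArg diagonal (funext fun i => mul_inv_cancel₀ (pow_ne_zero _ hd))
  set E : Matrix (Fin m) (Fin m) ℂ :=
    vecMulVec (fun i => d ^ (i : ℕ)) fun i => (d ^ (i : ℕ))⁻¹
  have hT : T = (2⁻¹ : ℂ) • (E + Eᵀ) := by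
    ext i j
    simp only [T, E, x, of_apply, Polynomial.Chebyshev.T_natAbs,
      Polynomial.Chebyshev.T_eval_half_add_inv hd, Matrix.smul_apply, Matrix.add_apply,
      transpose_apply, vecMulVec_apply, neg_sub, zpow_sub₀ hd, zpow_natCast, smul_eq_mul]
    ring
  calc (fun _ : Fin m => (1 : ℂ)) ⬝ᵥ (H⁻¹ *ᵥ fun _ => (1 : ℂ))
      = 1 ⬝ᵥ ((D⁻¹ * R⁻¹ * D) *ᵥ 1) := by rw [inv_conj hDdet]; rfl
    _ = trace (E * R⁻¹) := by
      rw [hDinv, one_dotProduct_diagonal_mul_mul_diagonal_mulVec_one,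
        dotProduct_mulVec_eq_trace_vecMulVec_mul]
    _ = trace (T * R⁻¹) := by
      rw [hT, Matrix.smul_mul, trace_smul, Matrix.add_mul, trace_add,
        trace_transpose_mul_of_isSymm hRsymm.inv, smul_eq_mul]
      ring

/-- With `H_m(d) = D_m⁻¹ R_m D_m` and `T_m(x)` the Toeplitz
matrix of Chebyshev polynomials at `x = (d+1/d)/2`, one has
`𝟙ᵀ H_m(d)⁻¹ 𝟙 = tr(T_m(x) R_m⁻¹)`. -/
theorem stmt_14 (m : ℕ) (hm : 0 < m) (d : ℂ) (hd : d ≠ 0) (ρ : ℝ)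
    (hρ0 : 0 < |ρ|) (hρ1 : |ρ| < 1)
    (R : Matrix (Fin m) (Fin m) ℂ)
    (hR : ∀ i j : Fin m, R i j =
      if (i : ℕ) = (j : ℕ) then 1 + (ρ : ℂ) ^ 2
      else if (i : ℕ) + 1 = (j : ℕ) ∨ (j : ℕ) + 1 = (i : ℕ) then -(ρ : ℂ) else 0) :
    let D : Matrix (Fin m) (Fin m) ℂ := Matrix.diagonal fun i => d ^ (i : ℕ)
    let H : Matrix (Fin m) (Fin m) ℂ := D⁻¹ * R * D
    let x : ℂ := (d + d⁻¹) / 2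
    let T : Matrix (Fin m) (Fin m) ℂ :=
      Matrix.of fun i j =>
        (Polynomial.Chebyshev.T ℂ (((i : ℤ) - (j : ℤ)).natAbs : ℤ)).eval x
    (fun _ : Fin m => (1 : ℂ)) ⬝ᵥ (H⁻¹ *ᵥ fun _ => (1 : ℂ)) =
      Matrix.trace (T * R⁻¹) :=
  stmt_14_general m d hd ρ R hR
end

section
/- Let C be the nilpotent N×N matrix with ρ on the superdiagonal (ρ real, |ρ| < 1), and define the operator 𝔻 = Id + Σ_{k=1}^{N-1}(C^k 𝕃^k + (Cᵀ)^k ℝᵢₜ^k) on sequences of vectors in ℝᴺ. Then 𝔻 is invertible with inverse 𝔻⁻¹ = (Id - Cᵀ ℝᵢₜ) ∘ D ∘ (Id - C 𝕃), where D = (I - C Cᵀ)⁻¹ acts entrywise on sequences. -/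
/-!
Put `a = C 𝕃` and `b = Cᵀ ℝᵢₜ` in the ring of linear endomorphisms of the sequence space.
A matrix acting entrywise commutes with both shifts, so `a ^ N = Cᴺ 𝕃ᴺ = 0` and `b ^ N = 0`;
hence `A = ∑_{k<N} a^k` and `B = ∑_{k<N} b^k` are the inverses of `1 - a` and `1 - b`, and
`𝔻 = A + B - 1`. In any ring, `(1 - a) (A + B - 1) (1 - b) = (1 - b) + (1 - a) - (1 - a) (1 - b)
= 1 - a b`, and `a b = C Cᵀ 𝕃 ℝᵢₜ = C Cᵀ` because `𝕃 ℝᵢₜ = Id` (while `ℝᵢₜ 𝕃 ≠ Id`). So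
`𝔻 = (1 - a)⁻¹ D⁻¹ (1 - b)⁻¹`, whose inverse is `(1 - b) D (1 - a)`. The matrix `1 - C Cᵀ` is
diagonal with entries `1 - ρ²` and `1`, hence invertible.
-/

open Matrix

/-- Left shift on sequences of vectors in `ℝᴺ`. -/
def leftShift {N : ℕ} (s : ℕ → (Fin N → ℝ)) : ℕ → (Fin N → ℝ) :=
  fun n => s (n + 1)

/-- Right shift (prepending the zero vector) on sequences of vectors in `ℝᴺ`. -/
def rightShift {N : ℕ} (s : ℕ → (Fin N → ℝ)) : ℕ → (Fin N → ℝ) :=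
  fun n => match n with
  | 0 => 0
  | n + 1 => s n

/-- A matrix acting entrywise on a sequence of vectors. -/
def matAct {N : ℕ} (A : Matrix (Fin N) (Fin N) ℝ) (s : ℕ → (Fin N → ℝ)) :
    ℕ → (Fin N → ℝ) :=
  fun n => A *ᵥ s n

open Finset

lemma Fin.sum_ite_val_eq {M : Type*} [AddCommMonoid M] {n : ℕ} (a : ℕ) (f : Fin n → M) :
    ∑ l : Fin n, (if a = (l : ℕ) then f l else 0) = if h : a < n then f ⟨a, h⟩ else 0 := by
  split_ifs with h
  · rw [Fintype.sum_eq_single ⟨a, h⟩ fun l hl => if_neg fun h' => hl (Fin.ext h'.symm)]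
    simp
  · exact sum_eq_zero fun l _ => if_neg fun h' : a = l => h (h' ▸ l.isLt)

section Superdiagonal

variable {R : Type*} [Semiring R] {n : ℕ} {ρ : R} {C : Matrix (Fin n) (Fin n) R}

lemma pow_apply_of_superdiag (hC : ∀ i j : Fin n, C i j = if (i : ℕ) + 1 = j then ρ else 0)
    (k : ℕ) (i j : Fin n) : (C ^ k) i j = if (i : ℕ) + k = j then ρ ^ k else 0 := by
  induction k generalizing i with
  | zero => simp [Matrix.one_apply, Fin.ext_iff]
  | succ k ih =>
    simp only [pow_succ', Matrix.mul_apply, hC, ite_mul, zero_mul, Fin.sum_ite_val_eq, ih]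
    split_ifs <;> first | rfl | (have := j.isLt; exfalso; omega) | simp

lemma pow_eq_zero_of_superdiag (hC : ∀ i j : Fin n, C i j = if (i : ℕ) + 1 = j then ρ else 0) :
    C ^ n = 0 := by
  ext i j
  rw [pow_apply_of_superdiag hC, if_neg (by omega), Matrix.zero_apply]

lemma mul_transpose_of_superdiag
    (hC : ∀ i j : Fin n, C i j = if (i : ℕ) + 1 = j then ρ else 0) :
    C * Cᵀ = Matrix.diagonal fun i : Fin n => if (i : ℕ) + 1 < n then ρ * ρ else 0 := by
  ext i j
  simp only [Matrix.mul_apply, Matrix.transpose_apply, hC, ite_mul, zero_mul, Fin.sum_ite_val_eq,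
    Matrix.diagonal_apply]
  split_ifs <;> first | rfl | (exfalso; omega) | simp_all [Fin.ext_iff]

end Superdiagonal

lemma isUnit_one_sub_mul_transpose_of_superdiag {n : ℕ} {ρ : ℝ} (hρ : |ρ| < 1)
    {C : Matrix (Fin n) (Fin n) ℝ}
    (hC : ∀ i j : Fin n, C i j = if (i : ℕ) + 1 = j then ρ else 0) :
    IsUnit (1 - C * Cᵀ) := by
  have hρ2 : ρ * ρ < 1 := by rw [← sq]; exact (sq_lt_one_iff_abs_lt_one ρ).2 hρ
  rw [mul_transpose_of_superdiag hC, ← Matrix.diagonal_one, Matrix.diagonal_sub,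
    Matrix.isUnit_diagonal, Pi.isUnit_iff]
  intro i
  split_ifs
  · exact (sub_pos.2 hρ2).ne'.isUnit
  · simp

section Ring

variable {R : Type*} [Ring R]

lemma one_add_sum_Icc_pow_eq_geom_sum {a : R} {n : ℕ} (ha : a ^ n = 0) :
    1 + ∑ k ∈ Icc 1 (n - 1), a ^ k = ∑ k ∈ range n, a ^ k := by
  cases n with
  | zero =>
    have : Subsingleton R := subsingleton_of_zero_eq_one (by simpa using ha.symm)
    exact Subsingleton.elim _ _
  | succ m =>
    rw [sum_range_eq_add_Ico _ (by omega), Nat.add_sub_cancel, ← Ico_add_one_right_eq_Icc,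
      pow_zero]

lemma one_sub_mul_add_sub_one_mul_one_sub {a b A B : R} (hA : (1 - a) * A = 1)
    (hB : B * (1 - b) = 1) : (1 - a) * (A + B - 1) * (1 - b) = 1 - a * b :=
  calc (1 - a) * (A + B - 1) * (1 - b)
      = (1 - a) * A * (1 - b) + (1 - a) * (B * (1 - b)) - (1 - a) * (1 - b) := by noncomm_ring
    _ = 1 - a * b := by rw [hA, hB]; noncomm_ring

theorem inverse_of_resolvents {a b A B d : R} (hA : (1 - a) * A = 1) (hA' : A * (1 - a) = 1)
    (hB : (1 - b) * B = 1) (hB' : B * (1 - b) = 1) (hd : d * (1 - a * b) = 1)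
    (hd' : (1 - a * b) * d = 1) :
    (1 - b) * d * (1 - a) * (A + B - 1) = 1 ∧ (A + B - 1) * ((1 - b) * d * (1 - a)) = 1 := by
  have key := one_sub_mul_add_sub_one_mul_one_sub hA hB'
  constructor
  · calc (1 - b) * d * (1 - a) * (A + B - 1)
        = (1 - b) * d * (1 - a) * (A + B - 1) * ((1 - b) * B) := by rw [hB, mul_one]
      _ = (1 - b) * d * ((1 - a) * (A + B - 1) * (1 - b)) * B := by noncomm_ring
      _ = 1 := by rw [key, mul_assoc (1 - b) d, hd, mul_one, hB]
  · calc (A + B - 1) * ((1 - b) * d * (1 - a))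
        = A * (1 - a) * (A + B - 1) * ((1 - b) * d * (1 - a)) := by rw [hA', one_mul]
      _ = A * ((1 - a) * (A + B - 1) * (1 - b)) * d * (1 - a) := by noncomm_ring
      _ = 1 := by rw [key, mul_assoc A, hd', mul_one, hA']

theorem inverse_of_pow_eq_zero {a b d : R} {n : ℕ} (ha : a ^ n = 0) (hb : b ^ n = 0)
    (hd : d * (1 - a * b) = 1) (hd' : (1 - a * b) * d = 1) :
    (1 - b) * d * (1 - a) * (1 + ∑ k ∈ Icc 1 (n - 1), (a ^ k + b ^ k)) = 1 ∧
      (1 + ∑ k ∈ Icc 1 (n - 1), (a ^ k + b ^ k)) * ((1 - b) * d * (1 - a)) = 1 := by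
  have hsum : 1 + ∑ k ∈ Icc 1 (n - 1), (a ^ k + b ^ k) =
      ∑ k ∈ range n, a ^ k + ∑ k ∈ range n, b ^ k - 1 := by
    rw [← one_add_sum_Icc_pow_eq_geom_sum ha, ← one_add_sum_Icc_pow_eq_geom_sum hb,
      sum_add_distrib]
    abel
  rw [hsum]
  exact inverse_of_resolvents (by rw [mul_neg_geom_sum, ha, sub_zero])
    (by rw [geom_sum_mul_neg, ha, sub_zero]) (by rw [mul_neg_geom_sum, hb, sub_zero])
    (by rw [geom_sum_mul_neg, hb, sub_zero]) hd hd'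

end Ring

section SequenceOperators

variable {N : ℕ}

def leftShiftLin : Module.End ℝ (ℕ → Fin N → ℝ) where
  toFun := leftShift
  map_add' _ _ := rfl
  map_smul' _ _ := rfl

def rightShiftLin : Module.End ℝ (ℕ → Fin N → ℝ) where
  toFun := rightShift
  map_add' s t := by funext n; cases n <;> simp [rightShift]
  map_smul' c s := by funext n; cases n <;> simp [rightShift]

def matActHom : Matrix (Fin N) (Fin N) ℝ →+* Module.End ℝ (ℕ → Fin N → ℝ) where
  toFun A :=
    { toFun := matAct A
      map_add' _ _ := funext fun _ => mulVec_add _ _ _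
      map_smul' c s := funext fun n => mulVec_smul A c (s n) }
  map_one' := LinearMap.ext fun _ => funext fun _ => one_mulVec _
  map_mul' A B := LinearMap.ext fun s => funext fun n => (mulVec_mulVec (s n) A B).symm
  map_zero' := LinearMap.ext fun s => funext fun n => zero_mulVec (s n)
  map_add' A B := LinearMap.ext fun s => funext fun n => add_mulVec A B (s n)

lemma leftShiftLin_mul_rightShiftLin :
    (leftShiftLin : Module.End ℝ (ℕ → Fin N → ℝ)) * rightShiftLin = 1 :=
  LinearMap.ext fun _ => rfl

lemma commute_matActHom_leftShiftLin (A : Matrix (Fin N) (Fin N) ℝ) :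
    Commute (matActHom A) leftShiftLin :=
  LinearMap.ext fun _ => rfl

lemma commute_matActHom_rightShiftLin (A : Matrix (Fin N) (Fin N) ℝ) :
    Commute (matActHom A) rightShiftLin := by
  refine LinearMap.ext fun s => funext fun n => ?_
  cases n <;> simp [matActHom, matAct, rightShiftLin, rightShift]

lemma matActHom_mul_leftShiftLin_pow (A : Matrix (Fin N) (Fin N) ℝ) (k : ℕ) :
    (matActHom A * leftShiftLin) ^ k = matActHom (A ^ k) * leftShiftLin ^ k := by
  rw [(commute_matActHom_leftShiftLin A).mul_pow, map_pow]

lemma matActHom_mul_rightShiftLin_pow (A : Matrix (Fin N) (Fin N) ℝ) (k : ℕ) :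
    (matActHom A * rightShiftLin) ^ k = matActHom (A ^ k) * rightShiftLin ^ k := by
  rw [(commute_matActHom_rightShiftLin A).mul_pow, map_pow]

lemma matActHom_mul_leftShiftLin_pow_apply (A : Matrix (Fin N) (Fin N) ℝ) (k : ℕ)
    (s : ℕ → Fin N → ℝ) :
    ((matActHom A * leftShiftLin : Module.End ℝ (ℕ → Fin N → ℝ)) ^ k) s =
      matAct (A ^ k) (leftShift^[k] s) := by
  rw [matActHom_mul_leftShiftLin_pow, Module.End.mul_apply, Module.End.pow_apply]
  rfl

lemma matActHom_mul_rightShiftLin_pow_apply (A : Matrix (Fin N) (Fin N) ℝ) (k : ℕ)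
    (s : ℕ → Fin N → ℝ) :
    ((matActHom A * rightShiftLin : Module.End ℝ (ℕ → Fin N → ℝ)) ^ k) s =
      matAct (A ^ k) (rightShift^[k] s) := by
  rw [matActHom_mul_rightShiftLin_pow, Module.End.mul_apply, Module.End.pow_apply]
  rfl

lemma matActHom_mul_leftShiftLin_mul_matActHom_mul_rightShiftLin
    (A B : Matrix (Fin N) (Fin N) ℝ) :
    matActHom A * leftShiftLin * (matActHom B * rightShiftLin) = matActHom (A * B) := by
  rw [mul_assoc, ← mul_assoc leftShiftLin, ← (commute_matActHom_leftShiftLin B).eq, mul_assoc,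
    leftShiftLin_mul_rightShiftLin, mul_one, map_mul]

lemma matActHom_nonsing_inv_mul {A : Matrix (Fin N) (Fin N) ℝ} (hA : IsUnit A) :
    matActHom A⁻¹ * matActHom A = 1 := by
  rw [← map_mul, Matrix.nonsing_inv_mul _ ((Matrix.isUnit_iff_isUnit_det A).1 hA), map_one]

lemma matActHom_mul_nonsing_inv {A : Matrix (Fin N) (Fin N) ℝ} (hA : IsUnit A) :
    matActHom A * matActHom A⁻¹ = 1 := by
  rw [← map_mul, Matrix.mul_nonsing_inv _ ((Matrix.isUnit_iff_isUnit_det A).1 hA), map_one]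

end SequenceOperators

theorem stmt_18_general (N : ℕ) (ρ : ℝ) (hρ : |ρ| < 1)
    (C : Matrix (Fin N) (Fin N) ℝ)
    (hC : ∀ i j : Fin N, C i j = if (i : ℕ) + 1 = (j : ℕ) then ρ else 0) :
    let Dmat : Matrix (Fin N) (Fin N) ℝ := (1 - C * Cᵀ)⁻¹
    let 𝔻 : (ℕ → (Fin N → ℝ)) → (ℕ → (Fin N → ℝ)) := fun s =>
      s + ∑ k ∈ Finset.Icc 1 (N - 1),
        (matAct (C ^ k) (leftShift^[k] s) + matAct (Cᵀ ^ k) (rightShift^[k] s))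
    let 𝔻inv : (ℕ → (Fin N → ℝ)) → (ℕ → (Fin N → ℝ)) := fun s =>
      (fun t => t - matAct Cᵀ (rightShift t))
        (matAct Dmat ((fun t => t - matAct C (leftShift t)) s))
    (∀ s, 𝔻inv (𝔻 s) = s) ∧ (∀ s, 𝔻 (𝔻inv s) = s) := by
  intro Dmat 𝔻 𝔻inv
  set a : Module.End ℝ (ℕ → Fin N → ℝ) := matActHom C * leftShiftLin with ha_def
  set b : Module.End ℝ (ℕ → Fin N → ℝ) := matActHom Cᵀ * rightShiftLin with hb_def
  have hab : 1 - a * b = matActHom (1 - C * Cᵀ) := by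
    rw [matActHom_mul_leftShiftLin_mul_matActHom_mul_rightShiftLin, map_sub, map_one]
  have hD := isUnit_one_sub_mul_transpose_of_superdiag hρ hC
  have hCN := pow_eq_zero_of_superdiag hC
  have ha : a ^ N = 0 := by
    rw [ha_def, matActHom_mul_leftShiftLin_pow, hCN, map_zero, zero_mul]
  have hb : b ^ N = 0 := by
    rw [hb_def, matActHom_mul_rightShiftLin_pow, ← transpose_pow, hCN, transpose_zero, map_zero,
      zero_mul]
  obtain ⟨hl, hr⟩ := inverse_of_pow_eq_zero ha hb
    (hab ▸ matActHom_nonsing_inv_mul hD) (hab ▸ matActHom_mul_nonsing_inv hD)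
  have h𝔻 : ∀ s, 𝔻 s = (1 + ∑ k ∈ Icc 1 (N - 1), (a ^ k + b ^ k)) s := fun s => by
    simp only [𝔻, LinearMap.add_apply, Module.End.one_apply, LinearMap.sum_apply, ha_def, hb_def,
      matActHom_mul_leftShiftLin_pow_apply, matActHom_mul_rightShiftLin_pow_apply]
  have h𝔻inv : ∀ s, 𝔻inv s = ((1 - b) * matActHom Dmat * (1 - a)) s := fun s => rfl
  refine ⟨fun s => ?_, fun s => ?_⟩
  · rw [h𝔻, h𝔻inv, ← Module.End.mul_apply, hl, Module.End.one_apply]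
  · rw [h𝔻inv, h𝔻, ← Module.End.mul_apply, hr, Module.End.one_apply]

/-- The operator `𝔻 = Id + Σ_{k=1}^{N-1}(C^k 𝕃^k + (Cᵀ)^k ℝᵢₜ^k)`
is invertible with inverse `(Id - Cᵀ ℝᵢₜ) ∘ D ∘ (Id - C 𝕃)`, where
`D = (I - C Cᵀ)⁻¹` acts entrywise. -/
theorem stmt_18 (N : ℕ) (hN : 1 ≤ N) (ρ : ℝ) (hρ : |ρ| < 1)
    (C : Matrix (Fin N) (Fin N) ℝ)
    (hC : ∀ i j : Fin N, C i j = if (i : ℕ) + 1 = (j : ℕ) then ρ else 0) :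
    let Dmat : Matrix (Fin N) (Fin N) ℝ := (1 - C * Cᵀ)⁻¹
    let 𝔻 : (ℕ → (Fin N → ℝ)) → (ℕ → (Fin N → ℝ)) := fun s =>
      s + ∑ k ∈ Finset.Icc 1 (N - 1),
        (matAct (C ^ k) (leftShift^[k] s) + matAct (Cᵀ ^ k) (rightShift^[k] s))
    let 𝔻inv : (ℕ → (Fin N → ℝ)) → (ℕ → (Fin N → ℝ)) := fun s =>
      (fun t => t - matAct Cᵀ (rightShift t))
        (matAct Dmat ((fun t => t - matAct C (leftShift t)) s))
    (∀ s, 𝔻inv (𝔻 s) = s) ∧ (∀ s, 𝔻 (𝔻inv s) = s) :=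
  stmt_18_general N ρ hρ C hC
end
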